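/- arXiv:1805.09085 — 3 statements merged into one kernel-verified Lean document; each statement's English description precedes it below -/
import Mathlib

section
/- Let $\chi>0$. The infimum of $\frac{1-q}{p}$ over all pairs $(p,q)$ with $0<p<\min\{1,1/\chi^2\}$ and $q_-(p)<q<q_+(p)$ (where $q_\pm(p)=\frac{1-p}{2}(1\pm\sqrt{1-p\chi^2})$) equals $1$ if $\chi\le 1$, equals $\chi$ if $1<\chi<2$, and equals $1+\chi^2/4$ if $\chi\ge 2$. -/
open Set

/-!
Put `t = 1 + √(1 - pχ²)`, so that `pχ² = t (2 - t)`. The admissible `p` correspond to the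
`t ∈ (1, 2)` with `t (2 - t) < χ²`, and for fixed `p` the ratios `(1 - q) / p` fill an open
interval whose lower end `(1 - q₊) / p` equals `(t + χ² / t) / 2`. The infimum of this function
of `t` is approached at `t = 1 + √(1 - χ²)` when `χ ≤ 1` (where the constraint `t (2 - t) < χ²`
binds), attained at `t = χ` when `1 < χ < 2` (AM-GM), and approached at `t = 2` when `χ ≥ 2`.
-/

noncomputable def admissibleT (χ : ℝ) : Set ℝ := {t | 1 < t ∧ t < 2 ∧ t * (2 - t) < χ ^ 2}

noncomputable def lowerEnd (χ t : ℝ) : ℝ := (t + χ ^ 2 / t) / 2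

noncomputable def ratioSet (χ : ℝ) : Set ℝ :=
  {z : ℝ | ∃ p q : ℝ, 0 < p ∧ p < min 1 (1 / χ^2) ∧
    (1 - p) / 2 * (1 - Real.sqrt (1 - p * χ^2)) < q ∧
    q < (1 - p) / 2 * (1 + Real.sqrt (1 - p * χ^2)) ∧
    z = (1 - q) / p}

noncomputable def infValue (χ : ℝ) : ℝ :=
  if χ ≤ 1 then 1 else if χ < 2 then χ else 1 + χ ^ 2 / 4

variable {χ : ℝ}

lemma lowerEnd_eq {p t : ℝ} (hp : 0 < p) (ht : t ≠ 0) (hpt : p * χ ^ 2 = t * (2 - t)) :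
    lowerEnd χ t = (1 - (1 - p) / 2 * t) / p := by
  unfold lowerEnd
  field_simp
  linear_combination hpt

lemma one_add_sqrt_mem_admissibleT (hχ : χ ≠ 0) {p : ℝ} (hp : 0 < p) (hp₁ : p < 1)
    (hpχ : p * χ ^ 2 < 1) : 1 + √(1 - p * χ ^ 2) ∈ admissibleT χ := by
  have hs : √(1 - p * χ ^ 2) ^ 2 = 1 - p * χ ^ 2 := Real.sq_sqrt (by linarith)
  have hs₀ : 0 < √(1 - p * χ ^ 2) := Real.sqrt_pos.2 (by linarith)
  have hpχ₀ : 0 < p * χ ^ 2 := by positivity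
  exact ⟨by linarith, by nlinarith, by nlinarith⟩

lemma lowerEnd_lt {p q : ℝ} (hp : 0 < p) (hpχ : p * χ ^ 2 < 1)
    (hq : q < (1 - p) / 2 * (1 + √(1 - p * χ ^ 2))) :
    lowerEnd χ (1 + √(1 - p * χ ^ 2)) < (1 - q) / p := by
  have hs : √(1 - p * χ ^ 2) ^ 2 = 1 - p * χ ^ 2 := Real.sq_sqrt (by linarith)
  rw [lowerEnd_eq hp (by positivity) (by linear_combination hs)]
  gcongr

lemma lowerEnd_mem_closure_ratioSet {t : ℝ} (ht : t ∈ admissibleT χ) :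
    lowerEnd χ t ∈ closure (ratioSet χ) := by
  obtain ⟨ht₁, ht₂, htχ⟩ := ht
  have hχ : 0 < χ ^ 2 := by nlinarith
  set p := t * (2 - t) / χ ^ 2
  have hpχ : p * χ ^ 2 = t * (2 - t) := div_mul_cancel₀ _ hχ.ne'
  have hp : 0 < p := by positivity
  have hp₁ : p < 1 := (div_lt_one hχ).2 htχ
  have hs : √(1 - p * χ ^ 2) = t - 1 := by
    rw [hpχ, show 1 - t * (2 - t) = (t - 1) ^ 2 by ring, Real.sqrt_sq (by linarith)]
  have hq : (1 - p) / 2 * (2 - t) < (1 - p) / 2 * t := by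
    gcongr
    linarith
  rw [lowerEnd_eq hp (by positivity) hpχ]
  refine map_mem_closure (f := fun q => (1 - q) / p)
    (s := Ioo ((1 - p) / 2 * (2 - t)) ((1 - p) / 2 * t)) (by fun_prop) ?_ ?_
  · rw [closure_Ioo hq.ne]
    exact right_mem_Icc.2 hq.le
  · rintro q ⟨hq_lo, hq_hi⟩
    refine ⟨p, q, hp, lt_min hp₁ ?_, ?_, ?_, rfl⟩
    · rw [lt_div_iff₀ hχ]; nlinarith
    · rw [hs]; linarith
    · rw [hs]; linarith

lemma infValue_le_lowerEnd {t : ℝ} (ht : t ∈ admissibleT χ) : infValue χ ≤ lowerEnd χ t := by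
  obtain ⟨ht₁, ht₂, htχ⟩ := ht
  have ht₀ : 0 < t := by linarith
  unfold infValue lowerEnd
  rw [le_div_iff₀ two_pos, ← sub_nonneg]
  have key : ∀ c, t + χ ^ 2 / t - c * 2 = (t ^ 2 - 2 * c * t + χ ^ 2) / t := fun c => by
    field_simp; ring
  split_ifs with h₁ h₂
  · rw [key]; apply div_nonneg _ ht₀.le; nlinarith
  · rw [key]; apply div_nonneg _ ht₀.le; nlinarith [sq_nonneg (t - χ)]
  · rw [key]; apply div_nonneg _ ht₀.le
    nlinarith [mul_nonneg (sub_nonneg.2 ht₂.le) (show 0 ≤ χ ^ 2 / 2 - t by nlinarith)]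

lemma lowerEnd_mem_closure_image {t₀ : ℝ} (ht₀ : 0 < t₀) (h : t₀ ∈ closure (admissibleT χ)) :
    lowerEnd χ t₀ ∈ closure (lowerEnd χ '' admissibleT χ) :=
  ContinuousWithinAt.mem_closure_image
    (by unfold lowerEnd; fun_prop (disch := exact ht₀.ne')) h

lemma infValue_mem_closure (hχ : 0 < χ) : infValue χ ∈ closure (lowerEnd χ '' admissibleT χ) := by
  unfold infValue
  split_ifs with h₁ h₂
  · set r := √(1 - χ ^ 2)
    have hr : r ^ 2 = 1 - χ ^ 2 := Real.sq_sqrt (by nlinarith)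
    have hr₀ : 0 ≤ r := Real.sqrt_nonneg _
    have hr₁ : r < 1 := by nlinarith
    have hsub : Ioo (1 + r) 2 ⊆ admissibleT χ := fun t ⟨ht₁, ht₂⟩ =>
      ⟨by linarith, ht₂, by nlinarith⟩
    have hleft : 1 + r ∈ closure (Ioo (1 + r) 2) := by
      rw [closure_Ioo (by linarith)]
      exact left_mem_Icc.2 (by linarith)
    convert lowerEnd_mem_closure_image (by positivity) (closure_mono hsub hleft) using 1
    unfold lowerEnd
    field_simp
    linear_combination -hr
  · exact subset_closure ⟨χ, ⟨not_le.1 h₁, h₂, by nlinarith⟩, by unfold lowerEnd; field_simp; ring⟩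
  · have hsub : Ioo 1 2 ⊆ admissibleT χ := fun t ⟨ht₁, ht₂⟩ => ⟨ht₁, ht₂, by nlinarith⟩
    have hright : (2 : ℝ) ∈ closure (Ioo 1 2) := by
      rw [closure_Ioo one_lt_two.ne]
      exact right_mem_Icc.2 one_le_two
    convert lowerEnd_mem_closure_image two_pos (closure_mono hsub hright) using 1
    unfold lowerEnd
    ring

theorem inf_one_sub_q_div_p (χ : ℝ) (hχ : 0 < χ) :
    sInf {z : ℝ | ∃ p q : ℝ, 0 < p ∧ p < min 1 (1 / χ^2) ∧
        (1 - p) / 2 * (1 - Real.sqrt (1 - p * χ^2)) < q ∧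
        q < (1 - p) / 2 * (1 + Real.sqrt (1 - p * χ^2)) ∧
        z = (1 - q) / p} =
      if χ ≤ 1 then 1 else if χ < 2 then χ else 1 + χ^2 / 4 := by
  change sInf (ratioSet χ) = infValue χ
  have hclosure : infValue χ ∈ closure (ratioSet χ) :=
    closure_minimal (image_subset_iff.2 fun _ => lowerEnd_mem_closure_ratioSet) isClosed_closure
      (infValue_mem_closure hχ)
  refine (isGLB_of_mem_closure ?_ hclosure).csInf_eq (closure_nonempty_iff.1 ⟨_, hclosure⟩)
  rintro z ⟨p, q, hp, hpχ, -, hq, rfl⟩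
  obtain ⟨hp₁, hpχ⟩ := lt_min_iff.1 hpχ
  rw [lt_div_iff₀ (by positivity)] at hpχ
  exact (infValue_le_lowerEnd (one_add_sqrt_mem_admissibleT hχ.ne' hp hp₁ hpχ)).trans
    (lowerEnd_lt hp hpχ hq).le
end

section
/- Let $a,b,T>0$ and let $y:(0,T)\to\mathbb{R}$ be continuously differentiable with $y'(t)\le -a\,y(t)^2+b$ for all $t\in(0,T)$ at which $y(t)>0$. Then $y(t)\le\sqrt{b/a}\,\coth(\sqrt{ab}\,t)$ for all $t\in(0,T)$. -/
/-!
The function `g_ε(t) = √(b/a) · coth(√(ab) (t - ε))` solves the Riccati equation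
`g' = -a g² + b` on `(ε, ∞)` and blows up at `ε⁺`. As `y` is bounded near `ε`, it starts below
`g_ε`, and it cannot cross `g_ε + δ`: at a contact point `y > g_ε ≥ 0`, so
`y' ≤ -a y² + b < -a g_ε² + b = (g_ε + δ)'`. Letting `δ → 0` and then `ε → 0` gives the bound.
-/

open Filter Set Topology

namespace Real

noncomputable def coth (x : ℝ) : ℝ := cosh x / sinh x

theorem coth_pos {x : ℝ} (hx : 0 < x) : 0 < coth x :=
  div_pos (cosh_pos x) (sinh_pos_iff.2 hx)

theorem hasDerivAt_coth {x : ℝ} (hx : x ≠ 0) : HasDerivAt coth (1 - coth x ^ 2) x := by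
  have hsinh : sinh x ≠ 0 := sinh_ne_zero.2 hx
  refine ((hasDerivAt_cosh x).div (hasDerivAt_sinh x) hsinh).congr_deriv ?_
  rw [coth]
  field_simp

theorem tendsto_coth_nhdsGT_zero : Tendsto coth (𝓝[>] 0) atTop := by
  have hsinh : Tendsto sinh (𝓝[>] 0) (𝓝[>] 0) :=
    tendsto_nhdsWithin_of_tendsto_nhds_of_eventually_within _
      ((continuous_sinh.tendsto' 0 0 sinh_zero).mono_left nhdsWithin_le_nhds)
      (eventually_nhdsWithin_of_forall fun _ hx => sinh_pos_iff.2 hx)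
  have hcosh : Tendsto cosh (𝓝[>] 0) (𝓝 1) :=
    (continuous_cosh.tendsto' 0 1 cosh_zero).mono_left nhdsWithin_le_nhds
  exact (hcosh.pos_mul_atTop one_pos (tendsto_inv_nhdsGT_zero.comp hsinh)).congr
    fun x => (div_eq_mul_inv _ _).symm

end Real

open Real

theorem le_of_hasDerivAt_le_of_strictAntiOn {F y y' g : ℝ → ℝ} {s t : ℝ} (hst : s ≤ t)
    (hF : StrictAntiOn F (Ici 0))
    (hy : ∀ x ∈ Icc s t, HasDerivAt y (y' x) x)
    (hy' : ∀ x ∈ Icc s t, 0 < y x → y' x ≤ F (y x))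
    (hg : ∀ x ∈ Icc s t, HasDerivAt g (F (g x)) x)
    (hg_nonneg : ∀ x ∈ Icc s t, 0 ≤ g x) (hys : y s ≤ g s) :
    y t ≤ g t := by
  refine le_of_forall_pos_le_add fun δ hδ => ?_
  refine image_le_of_deriv_right_lt_deriv_boundary' (B := fun x => g x + δ)
    (fun x hx => (hy x hx).continuousAt.continuousWithinAt)
    (fun x hx => (hy x (Ico_subset_Icc_self hx)).hasDerivWithinAt) (by linarith)
    (fun x hx => ((hg x hx).add_const δ).continuousAt.continuousWithinAt)
    (fun x hx => ((hg x (Ico_subset_Icc_self hx)).add_const δ).hasDerivWithinAt)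
    (fun x hx hcontact => ?_) ⟨hst, le_rfl⟩
  have hx := Ico_subset_Icc_self hx
  have hgy : g x < y x := by linarith
  have hg0 := hg_nonneg x hx
  calc y' x ≤ F (y x) := hy' x hx (hg0.trans_lt hgy)
    _ < F (g x) := hF hg0 (hg0.trans hgy.le) hgy

noncomputable def riccatiBarrier (a b ε t : ℝ) : ℝ :=
  √(b / a) * coth (√(a * b) * (t - ε))

section riccatiBarrier

variable {a b ε t : ℝ}

theorem riccatiBarrier_pos (ha : 0 < a) (hb : 0 < b) (ht : ε < t) :
    0 < riccatiBarrier a b ε t := by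
  unfold riccatiBarrier
  have := coth_pos (mul_pos (sqrt_pos.2 (mul_pos ha hb)) (sub_pos.2 ht))
  positivity

theorem hasDerivAt_riccatiBarrier (ha : 0 < a) (hb : 0 < b) (ht : ε < t) :
    HasDerivAt (riccatiBarrier a b ε) (-a * riccatiBarrier a b ε t ^ 2 + b) t := by
  have hc : 0 < √(a * b) := sqrt_pos.2 (mul_pos ha hb)
  have hinner : HasDerivAt (fun t => √(a * b) * (t - ε)) √(a * b) t := by
    simpa using ((hasDerivAt_id t).sub_const ε).const_mul √(a * b)
  refine (((hasDerivAt_coth (mul_pos hc (sub_pos.2 ht)).ne').comp t hinner).const_mul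
    √(b / a)).congr_deriv ?_
  have hqc : √(b / a) * √(a * b) = b := by
    rw [← sqrt_mul (div_pos hb ha).le, show b / a * (a * b) = b ^ 2 by field_simp]
    exact sqrt_sq hb.le
  have hq2 : a * √(b / a) ^ 2 = b := by
    rw [sq_sqrt (div_pos hb ha).le]
    field_simp
  rw [riccatiBarrier]
  linear_combination (1 - coth (√(a * b) * (t - ε)) ^ 2) * hqc
    + coth (√(a * b) * (t - ε)) ^ 2 * hq2

theorem tendsto_riccatiBarrier_nhdsGT (ha : 0 < a) (hb : 0 < b) :
    Tendsto (riccatiBarrier a b ε) (𝓝[>] ε) atTop := by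
  have hc : 0 < √(a * b) := sqrt_pos.2 (mul_pos ha hb)
  have hinner : Tendsto (fun t => √(a * b) * (t - ε)) (𝓝[>] ε) (𝓝[>] 0) :=
    tendsto_nhdsWithin_of_tendsto_nhds_of_eventually_within _
      (((continuous_const.mul (continuous_sub_right ε)).tendsto' ε 0 (by simp)).mono_left
        nhdsWithin_le_nhds)
      (eventually_nhdsWithin_of_forall fun _ hx => mul_pos hc (sub_pos.2 hx))
  exact (tendsto_coth_nhdsGT_zero.comp hinner).const_mul_atTop (sqrt_pos.2 (div_pos hb ha))

theorem le_riccatiBarrier (ha : 0 < a) (hb : 0 < b) {y y' : ℝ → ℝ} (hεt : ε < t)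
    (hy : ∀ x ∈ Icc ε t, HasDerivAt y (y' x) x)
    (hy' : ∀ x ∈ Icc ε t, 0 < y x → y' x ≤ -a * y x ^ 2 + b) :
    y t ≤ riccatiBarrier a b ε t := by
  have hgap : Tendsto (fun x => riccatiBarrier a b ε x - y x) (𝓝[>] ε) atTop :=
    (tendsto_riccatiBarrier_nhdsGT ha hb).atTop_add
      ((hy ε ⟨le_rfl, hεt.le⟩).continuousAt.tendsto.neg.mono_left nhdsWithin_le_nhds)
  obtain ⟨s, hys, hεs, hst⟩ :=
    ((hgap.eventually_ge_atTop 0).and (Ioo_mem_nhdsGT hεt)).exists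
  have hsub : Icc s t ⊆ Icc ε t := Icc_subset_Icc_left hεs.le
  have hF : StrictAntiOn (fun u => -a * u ^ 2 + b) (Ici 0) := fun u hu v _ huv => by
    have : u ^ 2 < v ^ 2 := by nlinarith [mem_Ici.1 hu]
    nlinarith
  exact le_of_hasDerivAt_le_of_strictAntiOn hst.le hF (fun x hx => hy x (hsub hx))
    (fun x hx => hy' x (hsub hx))
    (fun x hx => hasDerivAt_riccatiBarrier ha hb (hεs.trans_le hx.1))
    (fun x hx => (riccatiBarrier_pos ha hb (hεs.trans_le hx.1)).le) (by linarith)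

theorem continuousAt_riccatiBarrier_shift (ha : 0 < a) (hb : 0 < b) (ht : ε < t) :
    ContinuousAt (fun ε => riccatiBarrier a b ε t) ε := by
  have hne : √(a * b) * (t - ε) ≠ 0 :=
    (mul_pos (sqrt_pos.2 (mul_pos ha hb)) (sub_pos.2 ht)).ne'
  exact continuousAt_const.mul
    ((hasDerivAt_coth hne).continuousAt.comp (f := fun ε => √(a * b) * (t - ε)) (by fun_prop))

end riccatiBarrier

theorem ode_comparison_coth_general (a b T : ℝ) (ha : 0 < a) (hb : 0 < b)
    (y y' : ℝ → ℝ)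
    (hderiv : ∀ t ∈ Set.Ioo 0 T, HasDerivAt y (y' t) t)
    (hineq : ∀ t ∈ Set.Ioo 0 T, 0 < y t → y' t ≤ -a * (y t)^2 + b) :
    ∀ t ∈ Set.Ioo 0 T,
      y t ≤ Real.sqrt (b / a) *
        (Real.cosh (Real.sqrt (a * b) * t) / Real.sinh (Real.sqrt (a * b) * t)) := by
  rintro t ⟨ht0, htT⟩
  have hsub : ∀ ε ∈ Ioo 0 t, Icc ε t ⊆ Ioo 0 T := fun ε hε x hx =>
    ⟨hε.1.trans_le hx.1, hx.2.trans_lt htT⟩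
  have hbound : ∀ᶠ ε in 𝓝[>] 0, y t ≤ riccatiBarrier a b ε t := by
    filter_upwards [Ioo_mem_nhdsGT ht0] with ε hε
    exact le_riccatiBarrier ha hb hε.2 (fun x hx => hderiv x (hsub ε hε hx))
      (fun x hx => hineq x (hsub ε hε hx))
  have hlim := (continuousAt_riccatiBarrier_shift ha hb ht0).tendsto.mono_left
    (nhdsWithin_le_nhds (s := Ioi 0))
  simpa [riccatiBarrier, coth] using ge_of_tendsto hlim hbound

theorem ode_comparison_coth (a b T : ℝ) (ha : 0 < a) (hb : 0 < b) (hT : 0 < T)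
    (y y' : ℝ → ℝ)
    (hderiv : ∀ t ∈ Set.Ioo 0 T, HasDerivAt y (y' t) t)
    (hcont : ContinuousOn y' (Set.Ioo 0 T))
    (hineq : ∀ t ∈ Set.Ioo 0 T, 0 < y t → y' t ≤ -a * (y t)^2 + b) :
    ∀ t ∈ Set.Ioo 0 T,
      y t ≤ Real.sqrt (b / a) *
        (Real.cosh (Real.sqrt (a * b) * t) / Real.sinh (Real.sqrt (a * b) * t)) :=
  ode_comparison_coth_general a b T ha hb y y' hderiv hineq
end

section
/- Let $\chi\in(0,5/3)$. Then there exist $p\in(0,\min\{1,1/\chi^2\})$ and $q\in(q_-(p),q_+(p))$ with $q_\pm(p)=\frac{1-p}{2}(1\pm\sqrt{1-p\chi^2})$ such that $\frac{1-q}{p}<\frac{5}{3}$. -/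
theorem exists_pq_chi_lt (χ : ℝ) (hχ0 : 0 < χ) (hχ : χ < 5/3) :
    ∃ p q : ℝ, 0 < p ∧ p < min 1 (1 / χ^2) ∧
      (1 - p) / 2 * (1 - Real.sqrt (1 - p * χ^2)) < q ∧
      q < (1 - p) / 2 * (1 + Real.sqrt (1 - p * χ^2)) ∧
      (1 - q) / p < 5/3 := by
  have hχ2 : χ^2 < 25/9 := by nlinarith
  set t : ℝ := 1 - (1/5 : ℝ) * χ^2 with ht_def
  have ht : (4/9 : ℝ) < t := by simp only [ht_def]; nlinarith
  have ht0 : (0 : ℝ) ≤ t := le_of_lt (lt_trans (by norm_num) ht)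
  set a : ℝ := Real.sqrt ((4/9 + t)/2) with ha_def
  have ha23 : (2/3 : ℝ) < a := by
    rw [ha_def, show ((2:ℝ)/3) = Real.sqrt ((2/3)^2) by
      rw [Real.sqrt_sq (by norm_num)]]
    apply Real.sqrt_lt_sqrt (by norm_num)
    nlinarith
  have has : a < Real.sqrt t := by
    rw [ha_def]
    apply Real.sqrt_lt_sqrt (by positivity)
    linarith
  have ha0 : 0 ≤ a := Real.sqrt_nonneg _
  have hs0 : 0 ≤ Real.sqrt t := Real.sqrt_nonneg _
  refine ⟨1/5, 2/5 * (1 + a), by norm_num, ?_, ?_, ?_, ?_⟩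
  · rw [lt_min_iff]
    constructor
    · norm_num
    · rw [lt_div_iff₀ (by positivity)]
      nlinarith
  · have : (1 - 1/5 : ℝ) / 2 * (1 - Real.sqrt t) = 2/5 * (1 - Real.sqrt t) := by ring
    rw [show (1 - (1/5:ℝ) * χ^2) = t from rfl, this]
    nlinarith
  · have : (1 - 1/5 : ℝ) / 2 * (1 + Real.sqrt t) = 2/5 * (1 + Real.sqrt t) := by ring
    rw [show (1 - (1/5:ℝ) * χ^2) = t from rfl, this]
    nlinarith
  · rw [div_lt_iff₀ (by norm_num : (0:ℝ) < 1/5)]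
    nlinarith
end
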